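/- Let X, V, W, Y be real Banach spaces and D ⊆ X × V. Fix ρ > 0, α > 0, τ > 0, m, o, r ∈ [1,∞), x₀ ∈ X, and define the misfit 𝒮((w,y₁),(w',y₂)) := (ρ/m)‖w − w'‖_W^m + (1/o)‖y₁ − y₂‖_Y^o on (W × Y)², and C_S := max{2^{m−1}, 2^{o−1}}. Let A : X × V → W and C : V → Y be Fréchet differentiable at (x_k,u_k) ∈ D and u_k respectively, and define the linearized all-at-once operator 𝐋(x,u) := (A(x_k,u_k) + A'(x_k,u_k)(x − x_k, u − u_k), C(u_k) + C'(u_k)(u − u_k)). Let (x†,u†) ∈ D satisfy A(x†,u†) = 0 and C(u†) = y, let yδ ∈ Y with ‖y − yδ‖ ≤ δ, δ ≥ 0, and write 𝐅(x,u) := (A(x,u), C(u)). Assume: (i) (x_{k+1},u_{k+1}) minimizes 𝒮(𝐋(x,u),(0,yδ)) + (α/r)‖x − x₀‖^r over D; (ii) the tangential cone estimate 𝒮(𝐋(x†,u†), 𝐅(x†,u†)) ≤ c_tc·𝒮(𝐅(x†,u†), 𝐅(x_k,u_k)) holds with c_tc ≥ 0; (iii) 𝒮(𝐅(x_k,u_k),(0,yδ))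 ≥ τ δ^o/o (the discrepancy principle has not yet been reached); and (iv) 𝒮(𝐋(x_{k+1},u_{k+1}),(0,yδ)) ≥ σ̲·𝒮(𝐅(x_k,u_k),(0,yδ)) for some σ̲ ≥ 0. Then (σ̲ − C_S² c_tc − C_S(1 + C_S c_tc)/τ)·𝒮(𝐅(x_k,u_k),(0,yδ)) + (α/r)‖x_{k+1} − x₀‖^r ≤ (α/r)‖x† − x₀‖^r. In particular, if σ̲ ≥ C_S² c_tc + C_S(1 + C_S c_tc)/τ, then ‖x_{k+1} − x₀‖^r ≤ ‖x† − x₀‖^r. -/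

import Mathlib

/-!
The regularized functional at the new iterate is dominated by its value at the exact solution
`(x†, u†)`, so everything reduces to bounding the linearized misfit `𝒮(𝐋(x†,u†), (0,yδ))` by a
multiple of `𝒮(𝐅(x_k,u_k), (0,yδ))`. The misfit satisfies a quasi-triangle inequality with
constant `C_S` (convexity of `t ↦ t^p`); applying it twice, through `𝐅(x†,u†) = (0,y)` and
through `(0,yδ)`, and using the tangential cone condition, the problem reduces to `𝒮(𝐅(x†,u†), (0,yδ)) ≤ δ^o/o`, which the failed
discrepancy principle bounds by `𝒮(𝐅(x_k,u_k), (0,yδ)) / τ`.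
-/

namespace Real

lemma rpow_add_le_mul_rpow_add_rpow {p a b : ℝ} (ha : 0 ≤ a) (hb : 0 ≤ b) (hp : 1 ≤ p) :
    (a + b) ^ p ≤ 2 ^ (p - 1) * (a ^ p + b ^ p) := by
  lift a to NNReal using ha
  lift b to NNReal using hb
  exact_mod_cast NNReal.rpow_add_le_mul_rpow_add_rpow a b hp

end Real

lemma norm_sub_rpow_le {E : Type*} [SeminormedAddCommGroup E] (x y z : E) {p : ℝ}
    (hp : 1 ≤ p) :
    ‖x - z‖ ^ p ≤ 2 ^ (p - 1) * (‖x - y‖ ^ p + ‖y - z‖ ^ p) :=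
  calc ‖x - z‖ ^ p ≤ (‖x - y‖ + ‖y - z‖) ^ p :=
        Real.rpow_le_rpow (norm_nonneg _) (norm_sub_le_norm_sub_add_norm_sub x y z) (by linarith)
    _ ≤ _ := Real.rpow_add_le_mul_rpow_add_rpow (norm_nonneg _) (norm_nonneg _) hp

lemma le_of_quasi_triangle_of_tangential_cone {P : Type*} {S : P → P → ℝ} {c ctc τ d : ℝ}
    (htri : ∀ p q s, S p s ≤ c * (S p q + S q s)) (hc : 0 ≤ c) (hctc : 0 ≤ ctc)
    {l f z g : P} (hcone : S l f ≤ ctc * S f g) (hfz : S f z ≤ d / τ) (hzg : S z g ≤ d) :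
    S l z ≤ (c ^ 2 * ctc + c * (1 + c * ctc) / τ) * d := by
  have hfg : S f g ≤ c * (d / τ + d) :=
    (htri f z g).trans (mul_le_mul_of_nonneg_left (add_le_add hfz hzg) hc)
  have hlf : S l f ≤ ctc * (c * (d / τ + d)) :=
    hcone.trans (mul_le_mul_of_nonneg_left hfg hctc)
  calc S l z ≤ c * (S l f + S f z) := htri l f z
    _ ≤ c * (ctc * (c * (d / τ + d)) + d / τ) :=
        mul_le_mul_of_nonneg_left (add_le_add hlf hfz) hc
    _ = (c ^ 2 * ctc + c * (1 + c * ctc) / τ) * d := by ring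

section Misfit

variable {W Y : Type*} [SeminormedAddCommGroup W] [SeminormedAddCommGroup Y]

noncomputable def misfit (ρ m o : ℝ) (p q : W × Y) : ℝ :=
  ρ / m * ‖p.1 - q.1‖ ^ m + 1 / o * ‖p.2 - q.2‖ ^ o

variable {ρ m o : ℝ}

lemma misfit_nonneg (hρ : 0 ≤ ρ) (hm : 0 ≤ m) (ho : 0 ≤ o) (p q : W × Y) :
    0 ≤ misfit ρ m o p q := by
  unfold misfit
  positivity

lemma misfit_comm (p q : W × Y) : misfit ρ m o p q = misfit ρ m o q p := by
  rw [misfit, misfit, norm_sub_rev p.1, norm_sub_rev p.2]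

lemma misfit_le_quasi_triangle (hρ : 0 ≤ ρ) (hm : 1 ≤ m) (ho : 1 ≤ o) (p q s : W × Y) :
    misfit ρ m o p s ≤
      max ((2 : ℝ) ^ (m - 1)) ((2 : ℝ) ^ (o - 1)) * (misfit ρ m o p q + misfit ρ m o q s) := by
  set c := max ((2 : ℝ) ^ (m - 1)) ((2 : ℝ) ^ (o - 1))
  have hW : ρ / m * ‖p.1 - s.1‖ ^ m ≤ c * (ρ / m * (‖p.1 - q.1‖ ^ m + ‖q.1 - s.1‖ ^ m)) :=
    calc ρ / m * ‖p.1 - s.1‖ ^ m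
        ≤ ρ / m * (2 ^ (m - 1) * (‖p.1 - q.1‖ ^ m + ‖q.1 - s.1‖ ^ m)) := by
          gcongr
          exact norm_sub_rpow_le _ _ _ hm
      _ ≤ ρ / m * (c * (‖p.1 - q.1‖ ^ m + ‖q.1 - s.1‖ ^ m)) := by
          gcongr
          exact le_max_left _ _
      _ = _ := by ring
  have hY : 1 / o * ‖p.2 - s.2‖ ^ o ≤ c * (1 / o * (‖p.2 - q.2‖ ^ o + ‖q.2 - s.2‖ ^ o)) :=
    calc 1 / o * ‖p.2 - s.2‖ ^ o
        ≤ 1 / o * (2 ^ (o - 1) * (‖p.2 - q.2‖ ^ o + ‖q.2 - s.2‖ ^ o)) := by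
          gcongr
          exact norm_sub_rpow_le _ _ _ ho
      _ ≤ 1 / o * (c * (‖p.2 - q.2‖ ^ o + ‖q.2 - s.2‖ ^ o)) := by
          gcongr
          exact le_max_right _ _
      _ = _ := by ring
  calc misfit ρ m o p s ≤ c * (ρ / m * (‖p.1 - q.1‖ ^ m + ‖q.1 - s.1‖ ^ m))
        + c * (1 / o * (‖p.2 - q.2‖ ^ o + ‖q.2 - s.2‖ ^ o)) := add_le_add hW hY
    _ = _ := by unfold misfit; ring

lemma misfit_zero_left_le (hm : m ≠ 0) (ho : 0 ≤ o) {y yδ : Y} {δ : ℝ} (hδ : ‖y - yδ‖ ≤ δ) :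
    misfit ρ m o ((0 : W), y) ((0 : W), yδ) ≤ δ ^ o / o := by
  simp only [misfit, sub_self, norm_zero, Real.zero_rpow hm, mul_zero, zero_add]
  rw [one_div_mul_eq_div]
  gcongr

end Misfit
theorem allAtOnce_IRGNM_parameter_bound_general
    {X V W Y : Type*}
    [NormedAddCommGroup X]
    [NormedAddCommGroup W]
    [NormedAddCommGroup Y]
    (A : X × V → W) (C : V → Y) (D : Set (X × V))
    (ρ α τ m o r ctc σ CS : ℝ)
    (hρ : 0 < ρ) (hα : 0 < α) (hτ : 0 < τ)
    (hm : 1 ≤ m) (ho : 1 ≤ o) (hr : 1 ≤ r) (hctc : 0 ≤ ctc)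
    (hCS : CS = max ((2 : ℝ) ^ (m - 1)) ((2 : ℝ) ^ (o - 1)))
    (x₀ : X)
    (S : (W × Y) → (W × Y) → ℝ)
    (hS : ∀ p q' : W × Y,
      S p q' = ρ / m * ‖p.1 - q'.1‖ ^ m + 1 / o * ‖p.2 - q'.2‖ ^ o)
    (xk : X) (uk : V)
    (Lop : X × V → W × Y)
    (F : X × V → W × Y) (hF : ∀ p : X × V, F p = (A p, C p.2))
    (xdag : X) (udag : V) (hdagD : (xdag, udag) ∈ D)
    (hAdag : A (xdag, udag) = 0) (y : Y) (hCdag : C udag = y)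
    (yδ : Y) (δ : ℝ) (hnoise : ‖y - yδ‖ ≤ δ)
    (xk1 : X) (uk1 : V)
    (hmin : ∀ p ∈ D,
      S (Lop (xk1, uk1)) ((0 : W), yδ) + α / r * ‖xk1 - x₀‖ ^ r
        ≤ S (Lop p) ((0 : W), yδ) + α / r * ‖p.1 - x₀‖ ^ r)
    (htc : S (Lop (xdag, udag)) (F (xdag, udag))
        ≤ ctc * S (F (xdag, udag)) (F (xk, uk)))
    (hdisc : τ * δ ^ o / o ≤ S (F (xk, uk)) ((0 : W), yδ))
    (hsigma : σ * S (F (xk, uk)) ((0 : W), yδ)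
        ≤ S (Lop (xk1, uk1)) ((0 : W), yδ)) :
    (σ - CS ^ 2 * ctc - CS * (1 + CS * ctc) / τ) * S (F (xk, uk)) ((0 : W), yδ)
        + α / r * ‖xk1 - x₀‖ ^ r
      ≤ α / r * ‖xdag - x₀‖ ^ r ∧
    (CS ^ 2 * ctc + CS * (1 + CS * ctc) / τ ≤ σ →
      ‖xk1 - x₀‖ ^ r ≤ ‖xdag - x₀‖ ^ r) := by
  obtain rfl : S = misfit ρ m o := funext₂ hS
  set d := misfit ρ m o (F (xk, uk)) ((0 : W), yδ)
  have hFdag : F (xdag, udag) = ((0 : W), y) := by rw [hF, hAdag, hCdag]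
  have hexact : misfit ρ m o (F (xdag, udag)) ((0 : W), yδ) ≤ d / τ := by
    rw [hFdag, le_div_iff₀ hτ]
    calc _ ≤ δ ^ o / o * τ := by
          gcongr
          exact misfit_zero_left_le (by positivity) (by positivity) hnoise
      _ = τ * δ ^ o / o := by ring
      _ ≤ d := hdisc
  have hlin : misfit ρ m o (Lop (xdag, udag)) ((0 : W), yδ)
      ≤ (CS ^ 2 * ctc + CS * (1 + CS * ctc) / τ) * d :=
    le_of_quasi_triangle_of_tangential_cone (hCS ▸ misfit_le_quasi_triangle hρ.le hm ho)
      (by rw [hCS]; positivity) hctc htc hexact (misfit_comm _ _).le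
  have hstep : σ * d + α / r * ‖xk1 - x₀‖ ^ r
      ≤ (CS ^ 2 * ctc + CS * (1 + CS * ctc) / τ) * d + α / r * ‖xdag - x₀‖ ^ r := by
    linarith [hmin _ hdagD]
  refine ⟨by linarith, fun hσ => ?_⟩
  have hd : 0 ≤ (σ - CS ^ 2 * ctc - CS * (1 + CS * ctc) / τ) * d :=
    mul_nonneg (by linarith) (misfit_nonneg hρ.le (by linarith) (by linarith) _ _)
  exact le_of_mul_le_mul_left (a := α / r) (by linarith) (by positivity)

/-- One step of the all-at-once IRGNM with regularization of the parameter only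
(boundedness estimate (3.8) in Proposition 3.1): if the new iterate minimizes the
linearized misfit plus `(α/r)‖x−x₀‖^r` over `D`, the tangential cone estimate
holds, the discrepancy principle is not yet reached, and the inexact-Newton
lower bound holds, then
`(σ̲ − C_S²c_tc − C_S(1+C_Sc_tc)/τ)·𝒮(𝐅(x_k,u_k),(0,yδ)) + (α/r)‖x_{k+1}−x₀‖^r
  ≤ (α/r)‖x†−x₀‖^r`;
in particular `‖x_{k+1}−x₀‖^r ≤ ‖x†−x₀‖^r` when `σ̲ ≥ C_S²c_tc + C_S(1+C_Sc_tc)/τ`. -/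
theorem allAtOnce_IRGNM_parameter_bound
    {X V W Y : Type*}
    [NormedAddCommGroup X] [NormedSpace ℝ X] [CompleteSpace X]
    [NormedAddCommGroup V] [NormedSpace ℝ V] [CompleteSpace V]
    [NormedAddCommGroup W] [NormedSpace ℝ W] [CompleteSpace W]
    [NormedAddCommGroup Y] [NormedSpace ℝ Y] [CompleteSpace Y]
    (A : X × V → W) (C : V → Y) (D : Set (X × V))
    (ρ α τ m o r ctc σ CS : ℝ)
    (hρ : 0 < ρ) (hα : 0 < α) (hτ : 0 < τ)
    (hm : 1 ≤ m) (ho : 1 ≤ o) (hr : 1 ≤ r) (hctc : 0 ≤ ctc) (hσ : 0 ≤ σ)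
    (hCS : CS = max ((2 : ℝ) ^ (m - 1)) ((2 : ℝ) ^ (o - 1)))
    (x₀ : X)
    (S : (W × Y) → (W × Y) → ℝ)
    (hS : ∀ p q' : W × Y,
      S p q' = ρ / m * ‖p.1 - q'.1‖ ^ m + 1 / o * ‖p.2 - q'.2‖ ^ o)
    (xk : X) (uk : V) (hkD : (xk, uk) ∈ D)
    (A' : X × V →L[ℝ] W) (C' : V →L[ℝ] Y)
    (hA' : HasFDerivAt A A' (xk, uk)) (hC' : HasFDerivAt C C' uk)
    (Lop : X × V → W × Y)
    (hLop : ∀ p : X × V,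
      Lop p = (A (xk, uk) + A' (p.1 - xk, p.2 - uk), C uk + C' (p.2 - uk)))
    (F : X × V → W × Y) (hF : ∀ p : X × V, F p = (A p, C p.2))
    (xdag : X) (udag : V) (hdagD : (xdag, udag) ∈ D)
    (hAdag : A (xdag, udag) = 0) (y : Y) (hCdag : C udag = y)
    (yδ : Y) (δ : ℝ) (hδ : 0 ≤ δ) (hnoise : ‖y - yδ‖ ≤ δ)
    (xk1 : X) (uk1 : V) (hk1D : (xk1, uk1) ∈ D)
    (hmin : ∀ p ∈ D,
      S (Lop (xk1, uk1)) ((0 : W), yδ) + α / r * ‖xk1 - x₀‖ ^ r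
        ≤ S (Lop p) ((0 : W), yδ) + α / r * ‖p.1 - x₀‖ ^ r)
    (htc : S (Lop (xdag, udag)) (F (xdag, udag))
        ≤ ctc * S (F (xdag, udag)) (F (xk, uk)))
    (hdisc : τ * δ ^ o / o ≤ S (F (xk, uk)) ((0 : W), yδ))
    (hsigma : σ * S (F (xk, uk)) ((0 : W), yδ)
        ≤ S (Lop (xk1, uk1)) ((0 : W), yδ)) :
    (σ - CS ^ 2 * ctc - CS * (1 + CS * ctc) / τ) * S (F (xk, uk)) ((0 : W), yδ)
        + α / r * ‖xk1 - x₀‖ ^ r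
      ≤ α / r * ‖xdag - x₀‖ ^ r ∧
    (CS ^ 2 * ctc + CS * (1 + CS * ctc) / τ ≤ σ →
      ‖xk1 - x₀‖ ^ r ≤ ‖xdag - x₀‖ ^ r) :=
  allAtOnce_IRGNM_parameter_bound_general A C D ρ α τ m o r ctc σ CS hρ hα hτ hm ho hr hctc hCS x₀ S
    hS xk uk Lop F hF xdag udag hdagD hAdag y hCdag yδ δ hnoise xk1 uk1 hmin htc hdisc hsigma
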